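/- Let A ⊆ ℝⁿ×(0,∞) be a union of top half-cubes T(Q) = Q × [l(Q)/2, l(Q)] over some family of dyadic cubes Q of side length ≤ 1. Then A satisfies the hyperbolic plumpness condition: there exist δ, δ' ∈ (0,1/10) (depending only on n) such that for every z ∈ A, |B_ρ(z,δ) ∩ A| ≥ δ'|B_ρ(z,δ)|. -/

import Mathlib

/-!
With `δ = 2 arsinh s`, the condition `ρ(z, w) < δ` says that the Euclidean distance `|z - w|` is
less than `2 s √(z_{n+1} w_{n+1})`. For `s = 1/40` the ball `B_ρ(z, δ)` therefore lies in the
Euclidean cube of side `z_{n+1} / 5` centred at `z`, while every Euclidean cube of side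
`r ≤ l(Q) / (160 (n + 1))` containing `z ∈ T(Q)` lies in `B_ρ(z, δ)`; since `z_{n+1} ≤ l(Q)`, one such
cube fits inside `T(Q)`. Comparing the volumes of the two cubes gives `δ' = (32 (n + 1))^{-(n + 1)}`.
-/

open MeasureTheory

/-- The hyperbolic distance on the upper half-space `ℝⁿ × (0,∞)`. -/
noncomputable def hypDist {n : ℕ} (z w : EuclideanSpace ℝ (Fin n) × ℝ) : ℝ :=
  2 * Real.arsinh (Real.sqrt (dist z.1 w.1 ^ 2 + (z.2 - w.2) ^ 2) /
    (2 * Real.sqrt (z.2 * w.2)))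

/-- The hyperbolic ball of centre `z` and radius `r` in the upper half-space. -/
def hypBall {n : ℕ} (z : EuclideanSpace ℝ (Fin n) × ℝ) (r : ℝ) :
    Set (EuclideanSpace ℝ (Fin n) × ℝ) :=
  {w | 0 < w.2 ∧ hypDist z w < r}

/-- The dyadic cube `{x : 2^j x − k ∈ [0,1]^n}` of generation `j ≥ 0`. -/
def dyadicCube (n : ℕ) (j : ℕ) (k : Fin n → ℤ) : Set (EuclideanSpace ℝ (Fin n)) :=
  {x | ∀ i, (k i : ℝ) ≤ 2 ^ j * x i ∧ 2 ^ j * x i ≤ k i + 1}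

/-- The top half-cube `T(Q) = Q × [l(Q)/2, l(Q)]` of a dyadic cube of generation `j`. -/
def topHalf (n : ℕ) (j : ℕ) (k : Fin n → ℤ) : Set (EuclideanSpace ℝ (Fin n) × ℝ) :=
  dyadicCube n j k ×ˢ Set.Icc ((2 : ℝ) ^ (-(j : ℝ)) / 2) ((2 : ℝ) ^ (-(j : ℝ)))

open Real Set

section Boxes

variable {n : ℕ}

def box (p q : Fin n → ℝ) (p' q' : ℝ) : Set (EuclideanSpace ℝ (Fin n) × ℝ) :=
  {x : EuclideanSpace ℝ (Fin n) | ∀ i, x i ∈ Icc (p i) (q i)} ×ˢ Icc p' q'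

def cube (a : Fin n → ℝ) (b r : ℝ) : Set (EuclideanSpace ℝ (Fin n) × ℝ) :=
  box a (fun i => a i + r) b (b + r)

lemma volume_box (p q : Fin n → ℝ) (p' q' : ℝ) :
    volume (box p q p' q') = (∏ i, ENNReal.ofReal (q i - p i)) * ENNReal.ofReal (q' - p') := by
  have hpi : {x : EuclideanSpace ℝ (Fin n) | ∀ i, x i ∈ Icc (p i) (q i)} =
      (MeasurableEquiv.toLp 2 (Fin n → ℝ)).symm ⁻¹' univ.pi fun i => Icc (p i) (q i) := by
    ext x
    simp only [mem_preimage, mem_univ_pi]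
    rfl
  rw [box, Measure.volume_eq_prod, Measure.prod_prod, hpi,
    (EuclideanSpace.volume_preserving_symm_measurableEquiv_toLp (Fin n)).measure_preimage
      (MeasurableSet.univ_pi fun i => measurableSet_Icc).nullMeasurableSet,
    volume_pi_pi]
  simp only [Real.volume_Icc]

lemma volume_cube (a : Fin n → ℝ) (b r : ℝ) :
    volume (cube a b r) = ENNReal.ofReal r ^ (n + 1) := by
  simp only [cube, volume_box, add_sub_cancel_left, Finset.prod_const, Finset.card_univ,
    Fintype.card_fin, pow_succ]

lemma exists_Icc_subset_Icc_mem {p q x r : ℝ} (hx : x ∈ Icc p q) (hr : 0 ≤ r)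
    (hrq : r ≤ q - p) : ∃ c, x ∈ Icc c (c + r) ∧ Icc c (c + r) ⊆ Icc p q := by
  refine ⟨min x (q - r), ⟨min_le_left _ _, ?_⟩, Icc_subset_Icc ?_ ?_⟩
  · rcases min_cases x (q - r) with ⟨h, _⟩ | ⟨h, _⟩ <;> linarith [hx.2]
  · exact le_min hx.1 (by linarith)
  · linarith [min_le_right x (q - r)]

lemma exists_cube_subset_box {p q : Fin n → ℝ} {p' q' r : ℝ} {z : EuclideanSpace ℝ (Fin n) × ℝ}
    (hz : z ∈ box p q p' q') (hr : 0 ≤ r) (hrq : ∀ i, r ≤ q i - p i) (hrq' : r ≤ q' - p') :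
    ∃ a b, z ∈ cube a b r ∧ cube a b r ⊆ box p q p' q' := by
  choose a ha using fun i => exists_Icc_subset_Icc_mem (hz.1 i) hr (hrq i)
  obtain ⟨b, hb⟩ := exists_Icc_subset_Icc_mem hz.2 hr hrq'
  exact ⟨a, b, ⟨fun i => (ha i).1, hb.1⟩, prod_mono (fun x hx i => (ha i).2 (hx i)) hb.2⟩

end Boxes

section Hyperbolic

variable {n : ℕ}

lemma hypDist_lt_two_mul_arsinh_iff {z w : EuclideanSpace ℝ (Fin n) × ℝ} {s : ℝ} (hs : 0 < s)
    (hzw : 0 < z.2 * w.2) :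
    hypDist z w < 2 * arsinh s ↔ dist z.1 w.1 ^ 2 + (z.2 - w.2) ^ 2 < 4 * s ^ 2 * (z.2 * w.2) := by
  have hsq : (s * (2 * √(z.2 * w.2))) ^ 2 = 4 * s ^ 2 * (z.2 * w.2) := by
    rw [mul_pow, mul_pow, sq_sqrt hzw.le]; ring
  rw [hypDist, mul_lt_mul_iff_right₀ two_pos, arsinh_lt_arsinh, div_lt_iff₀ (by positivity),
    sqrt_lt' (by positivity), hsq]

lemma sq_sub_apply_le_dist_sq {ι : Type*} [Fintype ι] (x y : EuclideanSpace ℝ ι) (i : ι) :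
    (x i - y i) ^ 2 ≤ dist x y ^ 2 := by
  rw [← sq_abs, ← Real.dist_eq]
  exact pow_le_pow_left₀ dist_nonneg (PiLp.dist_apply_le x y i) 2

lemma dist_sq_le_of_forall_abs_sub_le {ι : Type*} [Fintype ι] {x y : EuclideanSpace ℝ ι} {r : ℝ}
    (h : ∀ i, |x i - y i| ≤ r) : dist x y ^ 2 ≤ Fintype.card ι * r ^ 2 := by
  rw [EuclideanSpace.dist_eq, sq_sqrt (by positivity)]
  calc ∑ i, dist (x i) (y i) ^ 2 ≤ ∑ _i : ι, r ^ 2 :=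
        Finset.sum_le_sum fun i _ => by
          rw [Real.dist_eq]; exact pow_le_pow_left₀ (abs_nonneg _) (h i) 2
    _ = Fintype.card ι * r ^ 2 := by simp

lemma hypBall_subset_cube {z : EuclideanSpace ℝ (Fin n) × ℝ} {s : ℝ} (hz : 0 < z.2)
    (hs : 0 < s) (hs' : s ≤ 1 / 2) :
    hypBall z (2 * arsinh s) ⊆
      cube (fun i => z.1 i - 4 * s * z.2) (z.2 - 4 * s * z.2) (8 * s * z.2) := by
  rintro w ⟨hw, hzw⟩
  rw [hypDist_lt_two_mul_arsinh_iff hs (mul_pos hz hw)] at hzw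
  have h4s : 4 * s ^ 2 ≤ 1 := by nlinarith
  -- `(z.2 - w.2)² < 4 s² z.2 w.2 ≤ z.2 w.2`
  have hw3 : w.2 ≤ 3 * z.2 := by nlinarith [sq_nonneg (dist z.1 w.1), mul_pos hz hw]
  have hD : dist z.1 w.1 ^ 2 + (z.2 - w.2) ^ 2 < (4 * s * z.2) ^ 2 := by
    nlinarith [mul_pos hz hw, mul_pos hs hz]
  have hR : 0 ≤ 4 * s * z.2 := by positivity
  refine ⟨fun i => ?_, ?_⟩
  · have := abs_lt_of_sq_lt_sq' (a := z.1 i - w.1 i)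
      (by nlinarith [sq_sub_apply_le_dist_sq z.1 w.1 i, sq_nonneg (z.2 - w.2)]) hR
    exact ⟨by linarith, by dsimp only; linarith⟩
  · have := abs_lt_of_sq_lt_sq' (a := z.2 - w.2) (by nlinarith [sq_nonneg (dist z.1 w.1)]) hR
    exact ⟨by linarith, by linarith⟩

lemma cube_subset_hypBall {z : EuclideanSpace ℝ (Fin n) × ℝ} {a : Fin n → ℝ} {b r s : ℝ}
    (hz : 0 < z.2) (hs : s ≤ 1 / 2) (hzc : z ∈ cube a b r) (hr : (n + 1) * r < s * z.2) :
    cube a b r ⊆ hypBall z (2 * arsinh s) := by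
  obtain ⟨hzc₁, hzc₂⟩ := hzc
  have hr0 : 0 ≤ r := by linarith [hzc₂.1, hzc₂.2]
  have hs0 : 0 < s := pos_of_mul_pos_left (by nlinarith : 0 < s * z.2) hz.le
  rintro w ⟨hw₁, hw₂⟩
  have hrz : r < s * z.2 := by nlinarith [(Nat.cast_nonneg n : (0 : ℝ) ≤ n)]
  have hw : z.2 / 2 ≤ w.2 := by nlinarith [hzc₂.2, hw₂.1]
  have hw0 : 0 < w.2 := by linarith
  refine ⟨hw0, (hypDist_lt_two_mul_arsinh_iff hs0 (mul_pos hz hw0)).2 ?_⟩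
  have hdist : dist z.1 w.1 ^ 2 ≤ n * r ^ 2 := by
    simpa using dist_sq_le_of_forall_abs_sub_le (x := z.1) (y := w.1) (r := r) fun i =>
      abs_le.2 ⟨by linarith [(hzc₁ i).1, (hw₁ i).2], by linarith [(hzc₁ i).2, (hw₁ i).1]⟩
  have hvert : (z.2 - w.2) ^ 2 ≤ r ^ 2 :=
    sq_le_sq' (by linarith [hzc₂.1, hw₂.2]) (by linarith [hzc₂.2, hw₂.1])
  calc dist z.1 w.1 ^ 2 + (z.2 - w.2) ^ 2 ≤ ((n + 1) * r) ^ 2 := by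
        nlinarith [(Nat.cast_nonneg n : (0 : ℝ) ≤ n), sq_nonneg r]
    _ < (s * z.2) ^ 2 := pow_lt_pow_left₀ hr (by positivity) two_ne_zero
    _ ≤ 4 * s ^ 2 * (z.2 * w.2) := by nlinarith [sq_nonneg s]

end Hyperbolic

section TopHalves

variable {n j : ℕ} {k : Fin n → ℤ}

lemma topHalf_eq_box (n j : ℕ) (k : Fin n → ℤ) :
    topHalf n j k = box (fun i => k i / 2 ^ j) (fun i => (k i + 1) / 2 ^ j)
      ((2 : ℝ) ^ (-(j : ℝ)) / 2) ((2 : ℝ) ^ (-(j : ℝ))) := by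
  ext x
  simp only [topHalf, box, dyadicCube, mem_prod, mem_Icc,
    div_le_iff₀' (by positivity : (0 : ℝ) < 2 ^ j), le_div_iff₀' (by positivity : (0 : ℝ) < 2 ^ j)]

lemma exists_cube_subset_topHalf {z : EuclideanSpace ℝ (Fin n) × ℝ} {r : ℝ}
    (hz : z ∈ topHalf n j k) (hr : 0 ≤ r) (hrj : r ≤ (2 : ℝ) ^ (-(j : ℝ)) / 2) :
    ∃ a b, z ∈ cube a b r ∧ cube a b r ⊆ topHalf n j k := by
  have hside : (2 : ℝ) ^ (-(j : ℝ)) = 1 / 2 ^ j := by simp [rpow_neg_natCast]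
  rw [topHalf_eq_box] at hz ⊢
  refine exists_cube_subset_box hz hr (fun i => ?_) (by linarith)
  rw [← sub_div, add_sub_cancel_left, ← hside]
  linarith [(by positivity : (0 : ℝ) < 2 ^ (-(j : ℝ)))]

lemma volume_hypBall_le_volume_inter_topHalf {z : EuclideanSpace ℝ (Fin n) × ℝ}
    (hz : z ∈ topHalf n j k) :
    ENNReal.ofReal ((32 * (n + 1 : ℝ))⁻¹ ^ (n + 1)) * volume (hypBall z (2 * arsinh (1 / 40))) ≤
      volume (hypBall z (2 * arsinh (1 / 40)) ∩ topHalf n j k) := by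
  set ℓ : ℝ := (2 : ℝ) ^ (-(j : ℝ))
  obtain ⟨hzℓ, hzℓ'⟩ : ℓ / 2 ≤ z.2 ∧ z.2 ≤ ℓ := hz.2
  have hz0 : 0 < z.2 := by linarith [(by positivity : 0 < ℓ)]
  set r : ℝ := ℓ / 160 / (n + 1)
  have hnr : (n + 1) * r = ℓ / 160 := by simp only [r]; field_simp
  obtain ⟨a, b, hza, hab⟩ := exists_cube_subset_topHalf hz (r := r) (by positivity)
    (by nlinarith [(Nat.cast_nonneg n : (0 : ℝ) ≤ n)])
  calc ENNReal.ofReal ((32 * (n + 1 : ℝ))⁻¹ ^ (n + 1)) * volume (hypBall z (2 * arsinh (1 / 40)))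
      ≤ ENNReal.ofReal ((32 * (n + 1 : ℝ))⁻¹ ^ (n + 1)) * volume (cube _ _ (8 * (1 / 40) * z.2)) := by
        gcongr; exact hypBall_subset_cube hz0 (by norm_num) (by norm_num)
    _ = ENNReal.ofReal ((32 * (n + 1 : ℝ))⁻¹ * (8 * (1 / 40) * z.2)) ^ (n + 1) := by
        rw [volume_cube, ← ENNReal.ofReal_pow (by positivity : (0 : ℝ) ≤ 8 * (1 / 40) * z.2),
          ← ENNReal.ofReal_mul (by positivity), ← mul_pow, ENNReal.ofReal_pow (by positivity)]
    _ ≤ ENNReal.ofReal r ^ (n + 1) := by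
        gcongr
        rw [← mul_le_mul_iff_right₀ (by positivity : (0 : ℝ) < n + 1), hnr]
        field_simp
        linarith
    _ = volume (cube a b r) := (volume_cube a b r).symm
    _ ≤ volume (hypBall z (2 * arsinh (1 / 40)) ∩ topHalf n j k) :=
        measure_mono <| subset_inter
          (cube_subset_hypBall hz0 (by norm_num) hza (by linarith)) hab

end TopHalves

lemma arsinh_le_self {x : ℝ} (hx : 0 ≤ x) : arsinh x ≤ x := by
  rw [← sinh_le_sinh, sinh_arsinh]
  exact self_le_sinh_iff.2 hx

/-- Any union of top half-cubes of dyadic cubes of side length at most 1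
satisfies the hyperbolic plumpness condition, with constants `δ, δ' ∈ (0, 1/10)` depending
only on `n`. -/
theorem plumpness_of_union_topHalves (n : ℕ) :
    ∃ δ δ' : ℝ, δ ∈ Set.Ioo (0 : ℝ) (1 / 10) ∧ δ' ∈ Set.Ioo (0 : ℝ) (1 / 10) ∧
      ∀ F : Set (ℕ × (Fin n → ℤ)),
        ∀ z ∈ ⋃ q ∈ F, topHalf n q.1 q.2,
          ENNReal.ofReal δ' * volume (hypBall z δ) ≤
            volume (hypBall z δ ∩ ⋃ q ∈ F, topHalf n q.1 q.2) := by
  refine ⟨2 * arsinh (1 / 40), (32 * (n + 1 : ℝ))⁻¹ ^ (n + 1), ⟨?_, ?_⟩, ⟨by positivity, ?_⟩, ?_⟩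
  · simp [arsinh_pos_iff]
  · linarith [arsinh_le_self (x := 1 / 40) (by norm_num)]
  · have hc : (32 * (n + 1 : ℝ))⁻¹ ≤ 32⁻¹ :=
      inv_anti₀ (by norm_num) (by linarith [(Nat.cast_nonneg n : (0 : ℝ) ≤ n)])
    linarith [pow_le_of_le_one (by positivity) (hc.trans (by norm_num)) (by omega : n + 1 ≠ 0)]
  rintro F z hz
  obtain ⟨⟨j, k⟩, hq, hzT⟩ := mem_iUnion₂.1 hz
  exact (volume_hypBall_le_volume_inter_topHalf hzT).trans <| measure_mono <|
    inter_subset_inter_right _ (subset_biUnion_of_mem (u := fun q => topHalf n q.1 q.2) hq)
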